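/- arXiv:1408.5907 — 3 statements merged into one kernel-verified Lean document; each statement's English description precedes it below -/
import Mathlib

section
/- Let s_λ be a thresholding function satisfying |s_λ(z)| ≤ c|y| whenever |z-y| ≤ λ (C1) and |s_λ(z)-z| ≤ λ (C3). If |ẑ - d| ≤ λ, then for any 0 ≤ q < 1, |s_λ(ẑ) - d| ≤ (2λ)^{1-q} (1+c)^q |d|^q. -/
theorem Real.min_le_rpow_mul_rpow {a b q : ℝ} (ha : 0 ≤ a) (hb : 0 ≤ b) (hq0 : 0 ≤ q)
    (hq1 : q ≤ 1) : min a b ≤ a ^ (1 - q) * b ^ q := by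
  have hm : 0 ≤ min a b := le_min ha hb
  calc min a b = min a b ^ (1 - q) * min a b ^ q := by
        rw [← Real.rpow_add_of_nonneg hm (by linarith) hq0, sub_add_cancel, Real.rpow_one]
    _ ≤ a ^ (1 - q) * b ^ q := by
        gcongr
        · exact min_le_left a b
        · exact min_le_right a b

/-- If a thresholding function satisfies (C1) and (C3), and `|ẑ - d| ≤ λ`, then
`|s_λ(ẑ) - d| ≤ (2λ)^{1-q} (1+c)^q |d|^q` for any `0 ≤ q < 1`. -/
theorem thresholding_error_bound (c lam q : ℝ) (hc : 0 < c) (hlam : 0 ≤ lam)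
    (hq0 : 0 ≤ q) (hq1 : q < 1) (s : ℝ → ℝ)
    (hC1 : ∀ z y : ℝ, |z - y| ≤ lam → |s z| ≤ c * |y|)
    (hC3 : ∀ z : ℝ, |s z - z| ≤ lam)
    (zhat d : ℝ) (h : |zhat - d| ≤ lam) :
    |s zhat - d| ≤ (2 * lam) ^ (1 - q) * (1 + c) ^ q * |d| ^ q := by
  have h_two_lam : |s zhat - d| ≤ 2 * lam :=
    calc |s zhat - d| ≤ |s zhat - zhat| + |zhat - d| := abs_sub_le _ _ _
      _ ≤ 2 * lam := by linarith [hC3 zhat]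
  have h_one_add_c : |s zhat - d| ≤ (1 + c) * |d| :=
    calc |s zhat - d| ≤ |s zhat| + |d| := abs_sub _ _
      _ ≤ (1 + c) * |d| := by linarith [hC1 zhat d h]
  calc |s zhat - d| ≤ min (2 * lam) ((1 + c) * |d|) := le_min h_two_lam h_one_add_c
    _ ≤ (2 * lam) ^ (1 - q) * ((1 + c) * |d|) ^ q :=
        Real.min_le_rpow_mul_rpow (by positivity) (by positivity) hq0 hq1.le
    _ = (2 * lam) ^ (1 - q) * (1 + c) ^ q * |d| ^ q := by
        rw [Real.mul_rpow (by positivity) (abs_nonneg d), mul_assoc]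
end

section
/- Let s_λ satisfy (C1) and (C3) as above and let 0 ≤ q < 1. If |ẑ - d| ≤ λ, then |s_λ(ẑ) - d|² ≤ (2λ)^{2-q} (1+c)^q |d|^q. -/
open Real

/-- Split `a² = a^(2-q) a^q` and bound each factor separately. -/
theorem sq_le_rpow_mul_rpow_of_le_of_le {a b e q : ℝ} (ha : 0 ≤ a) (hab : a ≤ b) (hae : a ≤ e)
    (hq0 : 0 ≤ q) (hq2 : q ≤ 2) : a ^ 2 ≤ b ^ (2 - q) * e ^ q :=
  calc a ^ 2 = a ^ (2 - q) * a ^ q := by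
        rw [← rpow_add' ha (by norm_num), sub_add_cancel, rpow_two]
    _ ≤ b ^ (2 - q) * e ^ q :=
        mul_le_mul (rpow_le_rpow ha hab (by linarith)) (rpow_le_rpow ha hae hq0)
          (rpow_nonneg ha q) (rpow_nonneg (ha.trans hab) _)

theorem thresholding_error_sq_bound_general (c lam q : ℝ) (hc : 0 < c)
    (hq0 : 0 ≤ q) (hq1 : q < 1) (s : ℝ → ℝ)
    (hC1 : ∀ z y : ℝ, |z - y| ≤ lam → |s z| ≤ c * |y|)
    (hC3 : ∀ z : ℝ, |s z - z| ≤ lam)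
    (zhat d : ℝ) (h : |zhat - d| ≤ lam) :
    |s zhat - d| ^ 2 ≤ (2 * lam) ^ (2 - q) * (1 + c) ^ q * |d| ^ q := by
  have hbias : |s zhat - d| ≤ 2 * lam := by
    linarith [abs_sub_le (s zhat) zhat d, hC3 zhat]
  have hshrink : |s zhat - d| ≤ (1 + c) * |d| := by
    linarith [abs_sub (s zhat) d, hC1 zhat d h]
  calc |s zhat - d| ^ 2 ≤ (2 * lam) ^ (2 - q) * ((1 + c) * |d|) ^ q :=
        sq_le_rpow_mul_rpow_of_le_of_le (abs_nonneg _) hbias hshrink hq0 (by linarith)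
    _ = (2 * lam) ^ (2 - q) * (1 + c) ^ q * |d| ^ q := by
        rw [mul_rpow (by linarith) (abs_nonneg d), mul_assoc]

/-- If a thresholding function satisfies (C1) and (C3), and `|ẑ - d| ≤ λ`, then
`|s_λ(ẑ) - d|² ≤ (2λ)^{2-q} (1+c)^q |d|^q` for any `0 ≤ q < 1`. -/
theorem thresholding_error_sq_bound (c lam q : ℝ) (hc : 0 < c) (hlam : 0 ≤ lam)
    (hq0 : 0 ≤ q) (hq1 : q < 1) (s : ℝ → ℝ)
    (hC1 : ∀ z y : ℝ, |z - y| ≤ lam → |s z| ≤ c * |y|)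
    (hC3 : ∀ z : ℝ, |s z - z| ≤ lam)
    (zhat d : ℝ) (h : |zhat - d| ≤ lam) :
    |s zhat - d| ^ 2 ≤ (2 * lam) ^ (2 - q) * (1 + c) ^ q * |d| ^ q :=
  thresholding_error_sq_bound_general c lam q hc hq0 hq1 s hC1 hC3 zhat d h
end

section
/- Let r, r̂, σ_ii, σ_jj, σ̂_ii, σ̂_jj, σ_ij, σ̂_ij be reals with σ_ii, σ_jj, σ̂_ii, σ̂_jj > 0, r = σ_ij/√(σ_ii σ_jj), r̂ = σ̂_ij/√(σ̂_ii σ̂_jj), and |r| ≤ 1. Define T = max(|σ̂_ij - σ_ij|/√(σ_ii σ_jj), |σ̂_ii - σ_ii|/σ_ii, |σ̂_jj - σ_jj|/σ_jj). If T ≤ 1/2, then |r̂ - r| ≤ 4T. -/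
/-! Put `s = √(σ_ii σ_jj)` and `ŝ = √(σ̂_ii σ̂_jj)`. Relative errors at most `T` in `σ̂_ii` and
`σ̂_jj` squeeze `σ̂_ii σ̂_jj` between `(1 ∓ T)² σ_ii σ_jj`, so `|ŝ - s| ≤ T s`. Then
`r̂ - r = (σ̂_ij - σ_ij)/ŝ + r (s - ŝ)/ŝ` is at most `2T s/ŝ ≤ 2T/(1 - T) ≤ 4T` in absolute value. -/

theorem abs_sqrt_mul_sub_sqrt_mul_le {a b a' b' T : ℝ} (ha : 0 < a) (hb : 0 < b) (hT : T ≤ 1)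
    (ha' : |a' - a| ≤ T * a) (hb' : |b' - b| ≤ T * b) :
    |√(a' * b') - √(a * b)| ≤ T * √(a * b) := by
  have hT₀ : 0 ≤ T := nonneg_of_mul_nonneg_left ((abs_nonneg _).trans ha') ha
  obtain ⟨ha'₁, ha'₂⟩ := abs_le.1 ha'
  obtain ⟨hb'₁, hb'₂⟩ := abs_le.1 hb'
  have hTa : T * a ≤ a := mul_le_of_le_one_left ha.le hT
  have hTb : T * b ≤ b := mul_le_of_le_one_left hb.le hT
  have hsqrt (c : ℝ) (hc : 0 ≤ c) : √((c * a) * (c * b)) = c * √(a * b) := by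
    rw [show c * a * (c * b) = c ^ 2 * (a * b) by ring, Real.sqrt_mul (sq_nonneg c),
      Real.sqrt_sq hc]
  have hlower : (1 - T) * √(a * b) ≤ √(a' * b') := by
    rw [← hsqrt _ (by linarith)]
    exact Real.sqrt_le_sqrt
      (mul_le_mul (by linarith) (by linarith) (mul_nonneg (by linarith) hb.le) (by linarith))
  have hupper : √(a' * b') ≤ (1 + T) * √(a * b) := by
    rw [← hsqrt _ (by linarith)]
    exact Real.sqrt_le_sqrt
      (mul_le_mul (by linarith) (by linarith) (by linarith) (by positivity))
  rw [abs_le]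
  constructor <;> linarith

theorem abs_div_sub_div_le {x x' s s' T : ℝ} (hs : 0 < s) (hx : |x / s| ≤ 1)
    (hx' : |x' - x| ≤ T * s) (hs' : |s' - s| ≤ T * s) (hT : T ≤ 1 / 2) :
    |x' / s' - x / s| ≤ 4 * T := by
  have hT₀ : 0 ≤ T := nonneg_of_mul_nonneg_left ((abs_nonneg _).trans hx') hs
  have hss' : s ≤ 2 * s' := by
    nlinarith [(abs_le.1 hs').1, mul_le_mul_of_nonneg_right hT hs.le]
  have hs'₀ : 0 < s' := by linarith
  have hsplit : x' / s' - x / s = (x' - x) / s' + x / s * ((s - s') / s') := by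
    field_simp
    ring
  calc |x' / s' - x / s|
      ≤ |x' - x| / s' + |x / s| * (|s - s'| / s') := by
        rw [hsplit, ← abs_of_pos hs'₀, ← abs_div, ← abs_div, ← abs_mul, abs_of_pos hs'₀]
        exact abs_add_le _ _
    _ ≤ T * s / s' + 1 * (T * s / s') := by
        rw [abs_sub_comm s]
        gcongr
    _ = 2 * T * (s / s') := by ring
    _ ≤ 2 * T * 2 := by
        gcongr
        rwa [div_le_iff₀ hs'₀]
    _ = 4 * T := by ring

theorem sample_correlation_error_bound_general
    (σii σjj σij σhii σhjj σhij r rh T : ℝ)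
    (hσii : 0 < σii) (hσjj : 0 < σjj)
    (hr : r = σij / Real.sqrt (σii * σjj)) (hrh : rh = σhij / Real.sqrt (σhii * σhjj))
    (hrle : |r| ≤ 1)
    (hT : T = max (|σhij - σij| / Real.sqrt (σii * σjj))
      (max (|σhii - σii| / σii) (|σhjj - σjj| / σjj)))
    (hThalf : T ≤ 1 / 2) :
    |rh - r| ≤ 4 * T := by
  have hs : 0 < √(σii * σjj) := Real.sqrt_pos.2 (mul_pos hσii hσjj)
  have hij : |σhij - σij| ≤ T * √(σii * σjj) :=
    (div_le_iff₀ hs).1 (hT ▸ le_max_left _ _)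
  have hii : |σhii - σii| ≤ T * σii :=
    (div_le_iff₀ hσii).1 (hT ▸ le_max_of_le_right (le_max_left _ _))
  have hjj : |σhjj - σjj| ≤ T * σjj :=
    (div_le_iff₀ hσjj).1 (hT ▸ le_max_of_le_right (le_max_right _ _))
  subst hr hrh
  exact abs_div_sub_div_le hs hrle hij
    (abs_sqrt_mul_sub_sqrt_mul_le hσii hσjj (by linarith) hii hjj) hThalf

/-- If the relative errors of `σ̂_ij`, `σ̂_ii`, `σ̂_jj` are all bounded by `T ≤ 1/2`,
then the sample correlation `r̂ = σ̂_ij/√(σ̂_ii σ̂_jj)` satisfies `|r̂ - r| ≤ 4T`. -/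
theorem sample_correlation_error_bound
    (σii σjj σij σhii σhjj σhij r rh T : ℝ)
    (hσii : 0 < σii) (hσjj : 0 < σjj) (hσhii : 0 < σhii) (hσhjj : 0 < σhjj)
    (hr : r = σij / Real.sqrt (σii * σjj)) (hrh : rh = σhij / Real.sqrt (σhii * σhjj))
    (hrle : |r| ≤ 1)
    (hT : T = max (|σhij - σij| / Real.sqrt (σii * σjj))
      (max (|σhii - σii| / σii) (|σhjj - σjj| / σjj)))
    (hThalf : T ≤ 1 / 2) :
    |rh - r| ≤ 4 * T :=
  sample_correlation_error_bound_general σii σjj σij σhii σhjj σhij r rh T hσii hσjj hr hrh hrle hT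
    hThalf
end
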